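/- arXiv:1410.3243 — 9 statements merged into one kernel-verified Lean document; each statement's English description precedes it below -/
import Mathlib

section
/- Every reduced ring is right Central McCoy. -/
/-- A ring `R` is *right Central McCoy* if whenever nonzero polynomials
`f, g ∈ R[x]` satisfy `f * g = 0`, there is a nonzero `r ∈ R` with
every coefficient of `f` times `r` central in `R`. -/
def IsRightCentralMcCoy (R : Type*) [Ring R] : Prop :=
  ∀ f g : Polynomial R, f ≠ 0 → g ≠ 0 → f * g = 0 →
    ∃ r : R, r ≠ 0 ∧ ∀ i : ℕ, f.coeff i * r ∈ Set.center R

/-!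
If `f * g = 0` over a reduced ring, every coefficient of `f` annihilates the trailing coefficient
`b` of `g` from the left, so `r = b` works, with all products `f.coeff i * r` equal to `0`.
By strong induction on `i`: multiplying the coefficient of `X ^ (i + natTrailingDegree g)` in
`f * g` by `b` on the left kills every term except `b * f.coeff i * b`, and in a reduced ring
`b * a * b = 0` forces `a * b = 0`.
-/

open Polynomial Finset.HasAntidiagonal

section Reduced

variable {M₀ : Type*} [MonoidWithZero M₀] [IsReduced M₀] {a b : M₀}

theorem IsReduced.mul_eq_zero_symm (h : a * b = 0) : b * a = 0 :=
  eq_zero_of_pow_eq_zero (n := 2) <| by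
    rw [sq, mul_assoc, ← mul_assoc a, h, zero_mul, mul_zero]

theorem IsReduced.mul_eq_zero_of_mul_mul_eq_zero (h : b * a * b = 0) : a * b = 0 :=
  eq_zero_of_pow_eq_zero (n := 2) <| by
    rw [sq, mul_assoc, ← mul_assoc b, h, mul_zero]

end Reduced

theorem Polynomial.coeff_mul_trailingCoeff_eq_zero_of_mul_eq_zero {R : Type*} [Semiring R]
    [IsReduced R] {f g : R[X]} (hfg : f * g = 0) (i : ℕ) :
    f.coeff i * g.trailingCoeff = 0 := by
  set b := g.trailingCoeff
  set m := g.natTrailingDegree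
  induction i using Nat.strong_induction_on with
  | _ i ih =>
    have hsum : b * (f * g).coeff (i + m) = b * f.coeff i * b := by
      rw [coeff_mul, Finset.mul_sum]
      refine (Finset.sum_eq_single (i, m) ?_ fun h => (h (mem_antidiagonal.mpr rfl)).elim).trans
        (mul_assoc _ _ _).symm
      rintro ⟨p, q⟩ hpq hne
      rw [mem_antidiagonal] at hpq
      rcases lt_or_ge q m with hq | hq
      · rw [coeff_eq_zero_of_lt_natTrailingDegree hq, mul_zero, mul_zero]
      · have hp : p < i := by
          by_contra! hp
          exact hne (Prod.ext (by omega) (by omega))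
        rw [← mul_assoc, IsReduced.mul_eq_zero_symm (ih p hp), zero_mul]
    apply IsReduced.mul_eq_zero_of_mul_mul_eq_zero
    rw [← hsum, hfg, coeff_zero, mul_zero]

theorem isReduced_isRightCentralMcCoy (R : Type*) [Ring R] [IsReduced R] :
    IsRightCentralMcCoy R := by
  intro f g _ hg hfg
  refine ⟨g.trailingCoeff, mt trailingCoeff_eq_zero.mp hg, fun i => ?_⟩
  rw [coeff_mul_trailingCoeff_eq_zero_of_mul_eq_zero hfg i]
  exact Set.zero_mem_center
end

section
/- Every reversible ring is right Central McCoy. -/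
namespace Polynomial

variable {R : Type*}

theorem coeff_mul_leadingCoeff_eq_zero_of_mul_eq_zero [Semiring R] {f h : R[X]} {k : ℕ}
    (hfh : f * h = 0) (hgt : ∀ i > k, ∀ j, f.coeff i * h.coeff j = 0) :
    f.coeff k * h.leadingCoeff = 0 := by
  suffices (f * h).coeff (k + h.natDegree) = f.coeff k * h.leadingCoeff by
    rw [← this, hfh, coeff_zero]
  rw [coeff_mul]
  refine Finset.sum_eq_single (k, h.natDegree) ?_ (by simp)
  simp only [Finset.HasAntidiagonal.mem_antidiagonal, ne_eq, Prod.forall, Prod.mk.injEq, not_and]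
  intro i j hij hne
  obtain hi | rfl | hi := lt_trichotomy i k
  · rw [coeff_eq_zero_of_natDegree_lt (by lia : h.natDegree < j), mul_zero]
  · lia
  · exact hgt i hi j

theorem mul_C_eq_zero_iff [Semiring R] {h : R[X]} {a : R} :
    h * C a = 0 ↔ ∀ j, h.coeff j * a = 0 := by
  simp only [Polynomial.ext_iff, coeff_mul_C, coeff_zero]

variable [Ring R]

theorem eq_zero_of_mul_eq_zero_of_reversible (hrev : ∀ a b : R, a * b = 0 → b * a = 0)
    (f : R[X]) (hf : ∀ r : R, (∀ i, f.coeff i * r = 0) → r = 0) (h : R[X]) (hfh : f * h = 0) :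
    h = 0 := by
  suffices hC : ∀ l, h * C (f.coeff l) = 0 by
    rw [← leadingCoeff_eq_zero]
    exact hf _ fun i ↦ hrev _ _ (mul_C_eq_zero_iff.mp (hC i) h.natDegree)
  apply Nat.strong_decreasing_induction
  · exact ⟨f.natDegree, fun i hi ↦ by rw [coeff_eq_zero_of_natDegree_lt hi, C_0, mul_zero]⟩
  intro l IH
  obtain hlt | hdeg := (natDegree_mul_C_le h (f.coeff l)).lt_or_eq
  · exact eq_zero_of_mul_eq_zero_of_reversible hrev f hf _ (by rw [← mul_assoc, hfh, zero_mul])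
  have hlead : f.coeff l * h.leadingCoeff = 0 :=
    coeff_mul_leadingCoeff_eq_zero_of_mul_eq_zero hfh fun i hi j ↦
      hrev _ _ (mul_C_eq_zero_iff.mp (IH i hi) j)
  rw [← leadingCoeff_eq_zero, leadingCoeff, hdeg, coeff_mul_C]
  exact hrev _ _ hlead
termination_by h.natDegree

theorem exists_coeff_mul_eq_zero_of_mul_eq_zero_of_reversible
    (hrev : ∀ a b : R, a * b = 0 → b * a = 0) {f g : R[X]} (hg : g ≠ 0) (hfg : f * g = 0) :
    ∃ r : R, r ≠ 0 ∧ ∀ i, f.coeff i * r = 0 := by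
  by_contra! hf
  refine hg (eq_zero_of_mul_eq_zero_of_reversible hrev f (fun r hr ↦ ?_) g hfg)
  by_contra hr0
  obtain ⟨i, hi⟩ := hf r hr0
  exact hi (hr i)

end Polynomial

theorem reversible_isRightCentralMcCoy (R : Type*) [Ring R]
    (hrev : ∀ a b : R, a * b = 0 → b * a = 0) :
    IsRightCentralMcCoy R := by
  intro f g _ hg hfg
  obtain ⟨r, hr, hfr⟩ := Polynomial.exists_coeff_mul_eq_zero_of_mul_eq_zero_of_reversible hrev hg hfg
  exact ⟨r, hr, fun i ↦ hfr i ▸ Set.zero_mem_center⟩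
end

section
/- For a ring R, the polynomial ring R[x] is right Central McCoy if and only if R is right Central McCoy. -/
open Polynomial

section Aux
variable {R : Type*} [Ring R]

theorem mem_center_polynomial_iff {p : R[X]} :
    p ∈ Set.center R[X] ↔ ∀ n, p.coeff n ∈ Set.center R := by
  constructor
  · intro hp n
    rw [Semigroup.mem_center_iff]
    intro b
    have h := (Semigroup.mem_center_iff.mp hp (C b))
    have := congrArg (fun q => Polynomial.coeff q n) h
    simpa [coeff_C_mul, coeff_mul_C] using this
  · intro h
    rw [Semigroup.mem_center_iff]
    intro q
    ext n
    rw [coeff_mul, coeff_mul, ← Finset.Nat.sum_antidiagonal_swap]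
    refine Finset.sum_congr rfl fun x hx => ?_
    simp only [Prod.fst_swap, Prod.snd_swap]
    exact Semigroup.mem_center_iff.mp (h x.1) (q.coeff x.2)

/-- substitution t ↦ x^k -/
noncomputable def phiSubst (k : ℕ) : (R[X])[X] →+* R[X] :=
  eval₂RingHom' (RingHom.id R[X]) (X ^ k) (fun a => (commute_X_pow a k).symm)

theorem phiSubst_coeff_key {k : ℕ} (F : (R[X])[X])
    (hdeg : ∀ i, (F.coeff i).natDegree < k) {i j : ℕ} (hj : j < k) :
    (phiSubst k F).coeff (k * i + j) = (F.coeff i).coeff j := by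
  have hterm : ∀ e : ℕ, ((F.coeff e * X ^ (k * e)).coeff (k * i + j))
      = if k * e ≤ k * i + j then (F.coeff e).coeff (k * i + j - k * e) else 0 :=
    fun e => coeff_mul_X_pow' _ _ _
  rw [phiSubst, eval₂RingHom', RingHom.coe_mk, MonoidHom.coe_mk, OneHom.coe_mk,
    eval₂_eq_sum, sum_def]
  simp only [RingHom.id_apply, ← pow_mul]
  rw [finset_sum_coeff]
  rw [Finset.sum_eq_single i]
  · rw [hterm, if_pos (Nat.le_add_right _ _), Nat.add_sub_cancel_left]
  · intro e _ hei
    rw [hterm]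
    rcases lt_or_gt_of_ne hei with hlt | hgt
    · have h1 : k * e + k ≤ k * i := by
        calc k * e + k = k * (e + 1) := by ring
        _ ≤ k * i := Nat.mul_le_mul_left k hlt
      rw [if_pos (by omega)]
      exact coeff_eq_zero_of_natDegree_lt (lt_of_lt_of_le (hdeg e) (by omega))
    · have h1 : k * i + k ≤ k * e := by
        calc k * i + k = k * (i + 1) := by ring
        _ ≤ k * e := Nat.mul_le_mul_left k hgt
      rw [if_neg (by omega)]
  · intro hi
    rw [notMem_support_iff.mp hi]
    simp

theorem phiSubst_ne_zero {k : ℕ} (F : (R[X])[X]) (hF : F ≠ 0)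
    (hdeg : ∀ i, (F.coeff i).natDegree < k) : phiSubst k F ≠ 0 := by
  intro h0
  have hc : F.coeff F.natDegree ≠ 0 := leadingCoeff_ne_zero.mpr hF
  have := phiSubst_coeff_key F hdeg (i := F.natDegree)
    (j := (F.coeff F.natDegree).natDegree) (hdeg _)
  rw [h0, coeff_zero] at this
  exact hc (leadingCoeff_eq_zero.mp this.symm)

end Aux

theorem polynomial_isRightCentralMcCoy_iff (R : Type*) [Ring R] :
    IsRightCentralMcCoy (Polynomial R) ↔ IsRightCentralMcCoy R := by
  constructor
  · -- R[x] McCoy → R McCoy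
    intro H f g hf hg hfg
    have hC : Function.Injective (Polynomial.map (C : R →+* R[X])) :=
      map_injective _ C_injective
    have hFG : f.map (C : R →+* R[X]) * g.map (C : R →+* R[X]) = 0 := by
      rw [← Polynomial.map_mul, hfg, Polynomial.map_zero]
    obtain ⟨r, hr, hcen⟩ := H (f.map C) (g.map C)
      (fun h => hf (hC (by simpa using h))) (fun h => hg (hC (by simpa using h))) hFG
    obtain ⟨j, hj⟩ : ∃ j, r.coeff j ≠ 0 := by
      by_contra h
      push_neg at h
      exact hr (Polynomial.ext fun n => by simp [h n])
    refine ⟨r.coeff j, hj, fun i => ?_⟩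
    have := (mem_center_polynomial_iff.mp (hcen i)) j
    simpa [coeff_map, coeff_C_mul] using this
  · -- R McCoy → R[x] McCoy
    intro H F G hF hG hFG
    set k : ℕ := (F.support.sup fun i => (F.coeff i).natDegree) ⊔
      (G.support.sup fun i => (G.coeff i).natDegree) + 1 with hk
    have hFdeg : ∀ i, (F.coeff i).natDegree < k := by
      intro i
      by_cases hi : i ∈ F.support
      · have : (F.coeff i).natDegree ≤ F.support.sup fun i => (F.coeff i).natDegree :=
          Finset.le_sup (f := fun i => (F.coeff i).natDegree) hi
        omega
      · rw [notMem_support_iff.mp hi]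
        simp [hk]
    have hGdeg : ∀ i, (G.coeff i).natDegree < k := by
      intro i
      by_cases hi : i ∈ G.support
      · have : (G.coeff i).natDegree ≤ G.support.sup fun i => (G.coeff i).natDegree :=
          Finset.le_sup (f := fun i => (G.coeff i).natDegree) hi
        omega
      · rw [notMem_support_iff.mp hi]
        simp [hk]
    have hmul : phiSubst k F * phiSubst k G = 0 := by
      rw [← map_mul, hFG, map_zero]
    obtain ⟨r, hr, hcen⟩ := H (phiSubst k F) (phiSubst k G)
      (phiSubst_ne_zero F hF hFdeg) (phiSubst_ne_zero G hG hGdeg) hmul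
    refine ⟨C r, fun h => hr (C_eq_zero.mp h), fun i => ?_⟩
    rw [mem_center_polynomial_iff]
    intro j
    rw [coeff_mul_C]
    by_cases hjk : j < k
    · rw [← phiSubst_coeff_key F hFdeg hjk]
      exact hcen (k * i + j)
    · rw [coeff_eq_zero_of_natDegree_lt (lt_of_lt_of_le (hFdeg i) (by omega))]
      simp
end

section
/- Let e be a central idempotent of a ring R. If both eR and (1−e)R are right Central McCoy, then R is right Central McCoy. -/
/-- Helper: if `u` is central with `u*u = u`, `b = u * b`, and `b` commutes with
everything of the form `u * s`, then `b` is central in `R`. -/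
lemma central_of_corner_comm {R : Type*} [Ring R] (u : R) (hu : u * u = u)
    (huc : u ∈ Set.center R) (b : R) (hb : b = u * b)
    (H : ∀ s : R, b * (u * s) = (u * s) * b) : b ∈ Set.center R := by
  rw [Semigroup.mem_center_iff]
  have hbu : b * u = b := by
    rw [hb, mul_assoc, ← (Set.mem_center_iff.mp huc).comm b, ← mul_assoc, hu]
  intro x
  have h1 : b * (u * x) = b * x := by rw [← mul_assoc, hbu]
  have h2 : (u * x) * b = x * b := by
    rw [(Set.mem_center_iff.mp huc).comm x, mul_assoc, ← hb]
  rw [← h1, ← h2, H]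

lemma corner_aux1 {R : Type*} [Ring R] {u : R} (hu : u * u = u)
    (huc : u ∈ Set.center R) (a t : R) : u * (a * (u * t)) = a * (u * t) :=
  calc u * (a * (u * t)) = (u * a) * (u * t) := (mul_assoc _ _ _).symm
    _ = (a * u) * (u * t) := by rw [(Set.mem_center_iff.mp huc).comm a]
    _ = a * ((u * u) * t) := by rw [mul_assoc, ← mul_assoc u u t]
    _ = a * (u * t) := by rw [hu]

lemma corner_aux2 {R : Type*} [Ring R] {u : R} (hu : u * u = u)
    (huc : u ∈ Set.center R) (a t : R) : (u * a) * (u * t) = a * (u * t) := by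
  rw [mul_assoc]; exact corner_aux1 hu huc a t

/-- If `e` is a central idempotent of `R` and both corner rings `eR` and `(1-e)R`
are right Central McCoy (stated elementwise, with centrality relative to the
corner ring), then `R` is right Central McCoy. -/
theorem isRightCentralMcCoy_of_corners (R : Type*) [Ring R] (e : R)
    (he : IsIdempotentElem e) (hec : e ∈ Set.center R)
    (h₁ : ∀ f g : Polynomial R,
      (∀ i : ℕ, f.coeff i ∈ Set.range (fun t : R => e * t)) →
      (∀ j : ℕ, g.coeff j ∈ Set.range (fun t : R => e * t)) →
      f ≠ 0 → g ≠ 0 → f * g = 0 →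
      ∃ r ∈ Set.range (fun t : R => e * t), r ≠ 0 ∧
        ∀ i : ℕ, ∀ s ∈ Set.range (fun t : R => e * t),
          f.coeff i * r * s = s * (f.coeff i * r))
    (h₂ : ∀ f g : Polynomial R,
      (∀ i : ℕ, f.coeff i ∈ Set.range (fun t : R => (1 - e) * t)) →
      (∀ j : ℕ, g.coeff j ∈ Set.range (fun t : R => (1 - e) * t)) →
      f ≠ 0 → g ≠ 0 → f * g = 0 →
      ∃ r ∈ Set.range (fun t : R => (1 - e) * t), r ≠ 0 ∧
        ∀ i : ℕ, ∀ s ∈ Set.range (fun t : R => (1 - e) * t),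
          f.coeff i * r * s = s * (f.coeff i * r)) :
    IsRightCentralMcCoy R := by
  intro f g hf hg hfg
  have he' : (1 - e) * (1 - e) = 1 - e := he.one_sub
  have hec' : (1 - e) ∈ Set.center R := by
    rw [Semigroup.mem_center_iff]
    intro x
    rw [mul_sub, sub_mul, mul_one, one_mul, (Set.mem_center_iff.mp hec).comm x]
  by_cases hge : Polynomial.C e * g = 0
  · -- `e` kills every coefficient of `g`
    have hgc : ∀ j, e * g.coeff j = 0 := by
      intro j
      have := congrArg (fun p => Polynomial.coeff p j) hge
      simpa [Polynomial.coeff_C_mul] using this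
    have hgc' : ∀ j, (1 - e) * g.coeff j = g.coeff j := by
      intro j; rw [sub_mul, one_mul, hgc j, sub_zero]
    by_cases hfe : Polynomial.C (1 - e) * f = 0
    · -- `1 - e` kills every coefficient of `f`: take `r = 1 - e`
      refine ⟨1 - e, ?_, fun i => ?_⟩
      · intro h0
        apply hg
        ext j
        have := hgc' j
        rw [h0, zero_mul] at this
        simp [← this]
      · have h := congrArg (fun p => Polynomial.coeff p i) hfe
        simp only [Polynomial.coeff_C_mul, Polynomial.coeff_zero] at h
        have : f.coeff i * (1 - e) = 0 := by
          rw [← (Set.mem_center_iff.mp hec').comm (f.coeff i), h]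
        rw [this]
        exact Set.zero_mem_center
    · -- apply `h₂` to `C (1-e) * f` and `g`
      have hfg2 : (Polynomial.C (1 - e) * f) * g = 0 := by
        rw [mul_assoc, hfg, mul_zero]
      obtain ⟨r, ⟨t, ht⟩, hr0, Hr⟩ := h₂ (Polynomial.C (1 - e) * f) g
        (fun i => ⟨f.coeff i, (Polynomial.coeff_C_mul f).symm⟩)
        (fun j => ⟨g.coeff j, hgc' j⟩) hfe hg hfg2
      simp only at ht
      refine ⟨r, hr0, fun i => ?_⟩
      refine central_of_corner_comm (1 - e) he' hec' _ ?_ ?_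
      · rw [← ht]; exact (corner_aux1 he' hec' _ t).symm
      · intro s
        have hco : (Polynomial.C (1 - e) * f).coeff i = (1 - e) * f.coeff i :=
          Polynomial.coeff_C_mul f
        have h := Hr i ((1 - e) * s) ⟨s, rfl⟩
        rw [hco, ← ht, corner_aux2 he' hec'] at h
        rw [← ht]
        exact h
  · by_cases hfe : Polynomial.C e * f = 0
    · -- `e` kills every coefficient of `f`: take `r = e`
      refine ⟨e, ?_, fun i => ?_⟩
      · intro h0
        apply hge
        rw [h0, map_zero, zero_mul]
      · have h := congrArg (fun p => Polynomial.coeff p i) hfe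
        simp only [Polynomial.coeff_C_mul, Polynomial.coeff_zero] at h
        have : f.coeff i * e = 0 := by
          rw [← (Set.mem_center_iff.mp hec).comm (f.coeff i), h]
        rw [this]
        exact Set.zero_mem_center
    · -- apply `h₁` to `C e * f` and `C e * g`
      have hcomm : Commute (Polynomial.C e) f := by
        unfold Commute SemiconjBy
        ext n
        rw [Polynomial.coeff_C_mul, Polynomial.coeff_mul_C,
          (Set.mem_center_iff.mp hec).comm]
      have hfg1 : (Polynomial.C e * f) * (Polynomial.C e * g) = 0 := by
        rw [hcomm.symm.mul_mul_mul_comm, ← map_mul, hfg, mul_zero]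
      obtain ⟨r, ⟨t, ht⟩, hr0, Hr⟩ := h₁ (Polynomial.C e * f) (Polynomial.C e * g)
        (fun i => ⟨f.coeff i, (Polynomial.coeff_C_mul f).symm⟩)
        (fun j => ⟨g.coeff j, (Polynomial.coeff_C_mul g).symm⟩) hfe hge hfg1
      simp only at ht
      refine ⟨r, hr0, fun i => ?_⟩
      refine central_of_corner_comm e he hec _ ?_ ?_
      · rw [← ht]; exact (corner_aux1 he hec _ t).symm
      · intro s
        have hco : (Polynomial.C e * f).coeff i = e * f.coeff i :=
          Polynomial.coeff_C_mul f
        have h := Hr i (e * s) ⟨s, rfl⟩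
        rw [hco, ← ht, corner_aux2 he hec] at h
        rw [← ht]
        exact h
end

section
/- For a field F, the upper triangular matrix ring T₂(F) is not right Central McCoy. -/
/-- The subring of `2 × 2` upper triangular matrices over `F`. -/
def upperTriangular2 (F : Type*) [Field F] : Subring (Matrix (Fin 2) (Fin 2) F) where
  carrier := {M | M 1 0 = 0}
  zero_mem' := rfl
  one_mem' := rfl
  add_mem' := by
    intro a b ha hb
    simp only [Set.mem_setOf_eq] at *
    simp [Matrix.add_apply, ha, hb]
  neg_mem' := by
    intro a ha
    simp only [Set.mem_setOf_eq] at *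
    simp [Matrix.neg_apply, ha]
  mul_mem' := by
    intro a b ha hb
    simp only [Set.mem_setOf_eq] at *
    simp [Matrix.mul_apply, Fin.sum_univ_two, ha, hb]

namespace UT2McCoy
open Polynomial

variable (F : Type*) [Field F]

abbrev T := upperTriangular2 F

def e11 : T F := ⟨!![1,0;0,0], by show _ = (0:F); simp⟩
def e12 : T F := ⟨!![0,1;0,0], by show _ = (0:F); simp⟩
def e22 : T F := ⟨!![0,0;0,1], by show _ = (0:F); simp⟩


lemma h1 : e12 F * e12 F = 0 := by
  apply Subtype.ext
  simp only [MulMemClass.coe_mul, ZeroMemClass.coe_zero, e11, e12, e22]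
  ext i j; fin_cases i <;> fin_cases j <;> simp [Matrix.mul_apply, Fin.sum_univ_two]

lemma h2 : e11 F * e12 F = e12 F := by
  apply Subtype.ext
  simp only [MulMemClass.coe_mul, ZeroMemClass.coe_zero, e11, e12, e22]
  ext i j; fin_cases i <;> fin_cases j <;> simp [Matrix.mul_apply, Fin.sum_univ_two]

lemma h3 : e12 F * e22 F = e12 F := by
  apply Subtype.ext
  simp only [MulMemClass.coe_mul, ZeroMemClass.coe_zero, e11, e12, e22]
  ext i j; fin_cases i <;> fin_cases j <;> simp [Matrix.mul_apply, Fin.sum_univ_two]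

lemma h4 : e11 F * e22 F = 0 := by
  apply Subtype.ext
  simp only [MulMemClass.coe_mul, ZeroMemClass.coe_zero, e11, e12, e22]
  ext i j; fin_cases i <;> fin_cases j <;> simp [Matrix.mul_apply, Fin.sum_univ_two]

lemma e12_ne : e12 F ≠ 0 := by
  intro h
  have := congrArg (fun m : T F => (m : Matrix (Fin 2) (Fin 2) F) 0 1) h
  simp [e12] at this

lemma e22_ne : e22 F ≠ 0 := by
  intro h
  have := congrArg (fun m : T F => (m : Matrix (Fin 2) (Fin 2) F) 1 1) h
  simp [e22] at this

lemma fg_zero :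
    (C (e12 F) + C (e11 F) * X) * (C (e12 F) - C (e22 F) * X) = 0 := by
  have hx : ∀ a : T F, (X : Polynomial (T F)) * C a = C a * X := fun a => X_mul_C a
  calc (C (e12 F) + C (e11 F) * X) * (C (e12 F) - C (e22 F) * X)
      = C (e12 F * e12 F) + C (e11 F * e12 F - e12 F * e22 F) * X
        - C (e11 F * e22 F) * (X * X) := by
        simp only [C_sub, C_mul]
        rw [add_mul, mul_sub, mul_sub, mul_assoc (C (e11 F)) X (C (e12 F)), hx,
          mul_assoc (C (e11 F)) X (C (e22 F) * X), ← mul_assoc X (C (e22 F)) X, hx]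
        noncomm_ring
    _ = 0 := by rw [h1, h2, h3, h4]; simp [sub_self]

end UT2McCoy

/-- `T₂(F)` is not right Central McCoy. -/
theorem upperTriangular2_not_isRightCentralMcCoy (F : Type*) [Field F] :
    ¬ IsRightCentralMcCoy (upperTriangular2 F) := by
  open UT2McCoy Polynomial in
  intro H
  set f : Polynomial (T F) := C (e12 F) + C (e11 F) * X with hf
  set g : Polynomial (T F) := C (e12 F) - C (e22 F) * X with hg
  have hfne : f ≠ 0 := by
    intro h
    have := congrArg (fun p => Polynomial.coeff p 0) h
    simp [hf] at this
    exact e12_ne F this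
  have hgne : g ≠ 0 := by
    intro h
    have := congrArg (fun p => Polynomial.coeff p 1) h
    simp [hg] at this
    exact e22_ne F this
  obtain ⟨r, hrne, hr⟩ := H f g hfne hgne (fg_zero F)
  have hc0 : f.coeff 0 = e12 F := by simp [hf]
  have hc1 : f.coeff 1 = e11 F := by simp [hf]
  have hz1 := (Semigroup.mem_center_iff.mp (hr 0))
  have hz2 := (Semigroup.mem_center_iff.mp (hr 1))
  rw [hc0] at hz1; rw [hc1] at hz2
  -- entry equations
  have entry : ∀ (a b : T F) (i j : Fin 2), a = b → (a : Matrix (Fin 2) (Fin 2) F) i j = (b : Matrix (Fin 2) (Fin 2) F) i j := by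
    intro a b i j h; rw [h]
  -- r entries
  set M : Matrix (Fin 2) (Fin 2) F := (r : Matrix (Fin 2) (Fin 2) F) with hM
  have h10 : M 1 0 = 0 := r.2
  -- e11 * (e11 * r) = (e11 * r) * e11 at (0,1) gives r01 = 0... compute
  have q1 := entry _ _ 0 1 (hz2 (e11 F))
  have q2 := entry _ _ 0 1 (hz2 (e12 F))
  have q3 := entry _ _ 0 1 (hz1 (e11 F))
  simp only [MulMemClass.coe_mul, e11, e12, ← hM] at q1 q2 q3
  simp [Matrix.mul_apply, Matrix.vecMul, dotProduct, Fin.sum_univ_two, h10] at q1 q2 q3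
  apply hrne
  apply Subtype.ext
  show M = 0
  ext i j
  fin_cases i <;> fin_cases j
  exacts [q2.symm, q1, h10, q3]
end

section
/- Let S be a multiplicatively closed subset of a ring R consisting of central regular elements, and let RS⁻¹ be the localization of R at S. Then R is right Central McCoy if and only if RS⁻¹ is right Central McCoy. -/
/-!
Since `S` is central, finitely many fractions have a common denominator, so every polynomial
over `RS⁻¹` becomes a polynomial over `R` after multiplication by a constant `s ∈ S`, which is a
central unit of `RS⁻¹[x]`. Regularity makes `R → RS⁻¹` injective, so it reflects zero products
and centrality. A witness `r` over `R` then gives the witness `sr` over `RS⁻¹`, while a witness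
`a/s` over `RS⁻¹` gives `a` over `R`, because `f_i a = f_i (a/s) s` is a product of central
elements.
-/

open Polynomial OreLocalization

theorem Set.mem_center_of_map_mem_center {F M N : Type*} [Semigroup M] [Semigroup N]
    [FunLike F M N] [MulHomClass F M N] {f : F} (hf : Function.Injective f) {a : M}
    (ha : f a ∈ Set.center N) : a ∈ Set.center M :=
  Semigroup.mem_center_iff.mpr fun b => hf <| by
    rw [map_mul, map_mul, Semigroup.mem_center_iff.mp ha]

theorem Polynomial.commute_C_of_mem_center {T : Type*} [Semiring T] {c : T}
    (hc : c ∈ Set.center T) (p : T[X]) : Commute (C c) p :=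
  Polynomial.ext fun n => by rw [coeff_C_mul, coeff_mul_C, Semigroup.mem_center_iff.mp hc]

namespace OreLocalization

variable {R : Type*} [Ring R] {S : Submonoid R} [OreSet S]

local notation "ι" => (numeratorRingHom : R →+* R[S⁻¹])

theorem numeratorRingHom_mem_center {a : R} (ha : a ∈ Set.center R) :
    ι a ∈ Set.center R[S⁻¹] := by
  refine Semigroup.mem_center_iff.mpr fun x => ?_
  induction x using OreLocalization.ind with
  | _ r s =>
    change r /ₒ s * (a /ₒ 1) = a /ₒ 1 * (r /ₒ s)
    rw [mul_div_one, oreDiv_mul_char a r 1 s a s (Semigroup.mem_center_iff.mp ha s),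
      Semigroup.mem_center_iff.mp ha r, mul_one]

theorem oreDiv_mul_numeratorRingHom {a : R} {s : S} (h : Commute a s) :
    a /ₒ s * ι (s : R) = ι a := by
  change a /ₒ s * ((s : R) /ₒ 1) = a /ₒ 1
  rw [mul_div_one, oreDiv_eq_iff]
  exact ⟨s, 1, by simpa [Submonoid.smul_def] using h.eq.symm, by simp⟩

theorem exists_mul_C_eq_map (hcent : ∀ s ∈ S, s ∈ Set.center R) (F : Polynomial R[S⁻¹]) :
    ∃ (s : S) (f : R[X]), F * C (ι (s : R)) = f.map ι := by
  induction F using Polynomial.induction_on' with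
  | add F G hF hG =>
    obtain ⟨s, f, hf⟩ := hF
    obtain ⟨t, g, hg⟩ := hG
    have hst : C (ι (s : R)) * C (ι (t : R)) = C (ι (t : R)) * C (ι (s : R)) :=
      (commute_C_of_mem_center (numeratorRingHom_mem_center (hcent t t.2)) _).eq.symm
    refine ⟨s * t, f * C (t : R) + g * C (s : R), ?_⟩
    rw [Polynomial.map_add, Polynomial.map_mul, Polynomial.map_mul, map_C, map_C, ← hf, ← hg,
      Submonoid.coe_mul, map_mul, C_mul, add_mul, ← mul_assoc, hst, ← mul_assoc]
  | monomial n α =>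
    induction α using OreLocalization.ind with
    | _ a s =>
      refine ⟨s, monomial n a, ?_⟩
      rw [monomial_mul_C, map_monomial,
        oreDiv_mul_numeratorRingHom (Semigroup.mem_center_iff.mp (hcent s s.2) a)]

end OreLocalization

namespace IsRightCentralMcCoy

variable {R : Type*} [Ring R] {S : Submonoid R} [OreSet S]

local notation "ι" => (numeratorRingHom : R →+* R[S⁻¹])

theorem oreLocalization (hR : IsRightCentralMcCoy R) (hS : S ≤ nonZeroDivisorsLeft R)
    (hcent : ∀ s ∈ S, s ∈ Set.center R) : IsRightCentralMcCoy R[S⁻¹] := by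
  intro F G hF hG hFG
  obtain ⟨s, f, hf⟩ := exists_mul_C_eq_map hcent F
  obtain ⟨t, g, hg⟩ := exists_mul_C_eq_map hcent G
  have hunit (u : S) : IsUnit (C (ι (u : R))) := isUnit_C.mpr (numerator_isUnit u)
  have hf0 : f ≠ 0 := by
    rintro rfl
    exact hF ((hunit s).mul_left_eq_zero.mp (by simpa using hf))
  have hg0 : g ≠ 0 := by
    rintro rfl
    exact hG ((hunit t).mul_left_eq_zero.mp (by simpa using hg))
  have hfg : f * g = 0 := by
    refine map_injective ι (numeratorHom_inj hS) ?_
    rw [Polynomial.map_mul, Polynomial.map_zero, ← hf, ← hg, mul_assoc, ← mul_assoc (C _),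
      (commute_C_of_mem_center (numeratorRingHom_mem_center (hcent s s.2)) G).eq,
      ← mul_assoc, ← mul_assoc, hFG, zero_mul, zero_mul]
  obtain ⟨r, hr0, hr⟩ := hR f g hf0 hg0 hfg
  refine ⟨ι (s * r), fun h => hr0 (hS s.2 r ?_), fun i => ?_⟩
  · exact numeratorHom_inj hS (h.trans (map_zero ι).symm)
  · rw [map_mul, ← mul_assoc, ← coeff_mul_C, hf, coeff_map, ← map_mul]
    exact numeratorRingHom_mem_center (hr i)

theorem of_oreLocalization (hL : IsRightCentralMcCoy R[S⁻¹]) (hS : S ≤ nonZeroDivisorsLeft R)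
    (hcent : ∀ s ∈ S, s ∈ Set.center R) : IsRightCentralMcCoy R := by
  intro f g hf hg hfg
  have hinj : Function.Injective ι := numeratorHom_inj hS
  have hfg' : f.map ι * g.map ι = 0 := by rw [← Polynomial.map_mul, hfg, Polynomial.map_zero]
  obtain ⟨ρ, hρ, hc⟩ := hL (f.map ι) (g.map ι) ((Polynomial.map_ne_zero_iff hinj).mpr hf)
    ((Polynomial.map_ne_zero_iff hinj).mpr hg) hfg'
  induction ρ using OreLocalization.ind with
  | _ a s =>
    refine ⟨a, fun ha => hρ (by rw [ha, zero_oreDiv]), fun i => ?_⟩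
    have hcoeff : ι (f.coeff i * a) = (f.map ι).coeff i * (a /ₒ s) * ι (s : R) := by
      rw [mul_assoc, oreDiv_mul_numeratorRingHom (Semigroup.mem_center_iff.mp (hcent s s.2) a),
        coeff_map, map_mul]
    refine Set.mem_center_of_map_mem_center hinj ?_
    rw [hcoeff]
    exact Set.mul_mem_center (hc i) (numeratorRingHom_mem_center (hcent s s.2))

end IsRightCentralMcCoy

/-- Let `S` be a multiplicatively closed subset of `R` consisting of central
regular elements.  Then `R` is right Central McCoy iff the localization
`RS⁻¹` (the Ore localization of `R` at `S`) is right Central McCoy. -/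
theorem isRightCentralMcCoy_iff_oreLocalization (R : Type*) [Ring R]
    (S : Submonoid R) [OreLocalization.OreSet S]
    (hcent : ∀ s ∈ S, s ∈ Set.center R)
    (hreg : ∀ s ∈ S, IsRegular s) :
    IsRightCentralMcCoy R ↔ IsRightCentralMcCoy (OreLocalization S R) := by
  have hS : S ≤ nonZeroDivisorsLeft R := fun s hs => (hreg s hs).left.mem_nonZeroDivisorsLeft
  exact ⟨fun h => h.oreLocalization hS hcent, fun h => h.of_oreLocalization hS hcent⟩
end

section
/- For a ring R, the Laurent polynomial ring R[x, x⁻¹] is right Central McCoy if and only if R[x] is right Central McCoy. -/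
open Polynomial LaurentPolynomial

section Aux

variable {R : Type*} [Ring R]

lemma T_mem_center (n : ℤ) : (T n : R[T;T⁻¹]) ∈ Set.center R[T;T⁻¹] :=
  Semigroup.mem_center_iff.mpr fun g => ((commute_T n g).symm).eq

lemma central_of_toLaurent_central {p : R[X]}
    (h : toLaurent p ∈ Set.center R[T;T⁻¹]) : p ∈ Set.center R[X] := by
  rw [Semigroup.mem_center_iff] at h ⊢
  intro q
  apply Polynomial.toLaurent_injective
  simpa only [map_mul] using h (toLaurent q)

lemma toLaurent_central_of_central {p : R[X]}
    (h : p ∈ Set.center R[X]) : toLaurent p ∈ Set.center R[T;T⁻¹] := by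
  rw [Semigroup.mem_center_iff] at h ⊢
  intro q
  obtain ⟨n, q', hq⟩ := q.exists_T_pow
  have hTn : IsUnit (T (n : ℤ) : R[T;T⁻¹]) := isUnit_T _
  apply hTn.mul_right_cancel
  calc q * toLaurent p * T (n : ℤ)
      = q * T (n : ℤ) * toLaurent p := by
        rw [mul_assoc, mul_assoc, (commute_T (n : ℤ) (toLaurent p)).eq]
    _ = toLaurent (q' * p) := by rw [← hq, map_mul]
    _ = toLaurent (p * q') := by rw [h q']
    _ = toLaurent p * (q * T (n : ℤ)) := by rw [map_mul, hq]
    _ = toLaurent p * q * T (n : ℤ) := by rw [mul_assoc]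

/-- Multiplying a Laurent polynomial by a large enough power of `T` lands in the image of
`toLaurent`; uniform version over the coefficients of a polynomial. -/
lemma exists_uniform_T_pow (F : Polynomial R[T;T⁻¹]) :
    ∃ n : ℕ, ∀ i : ℕ, F.coeff i * T (n : ℤ) ∈ Set.range (toLaurent : R[X] →+* R[T;T⁻¹]) := by
  choose nf hf using fun i : ℕ => (F.coeff i).exists_T_pow
  refine ⟨F.support.sup nf, fun i => ?_⟩
  by_cases hi : i ∈ F.support
  · have hle : nf i ≤ F.support.sup nf := Finset.le_sup hi
    obtain ⟨k, hk⟩ := Nat.exists_eq_add_of_le hle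
    refine ⟨(hf i).choose * X ^ k, ?_⟩
    rw [map_mul, (hf i).choose_spec, Polynomial.toLaurent_X_pow, mul_assoc, ← T_add]
    norm_cast
    rw [← hk]
  · simp only [Polynomial.notMem_support_iff] at hi
    exact ⟨0, by simp [hi]⟩

lemma mul_C_central_comm (F : Polynomial R[T;T⁻¹]) {a : R[T;T⁻¹]}
    (ha : a ∈ Set.center R[T;T⁻¹]) : F * Polynomial.C a = Polynomial.C a * F := by
  rw [Semigroup.mem_center_iff] at ha
  ext i
  rw [Polynomial.coeff_mul_C, Polynomial.coeff_C_mul, ha]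

end Aux

theorem laurent_isRightCentralMcCoy_iff (R : Type*) [Ring R] :
    IsRightCentralMcCoy (LaurentPolynomial R) ↔
      IsRightCentralMcCoy (Polynomial R) := by
  constructor
  · -- Laurent McCoy → Polynomial McCoy
    intro h f g hf hg hfg
    have hinj : Function.Injective (toLaurent : R[X] →+* R[T;T⁻¹]) :=
      Polynomial.toLaurent_injective
    have hFG : (f.map toLaurent) * (g.map toLaurent) = 0 := by
      rw [← Polynomial.map_mul, hfg, Polynomial.map_zero]
    obtain ⟨ρ, hρ, hcen⟩ := h (f.map toLaurent) (g.map toLaurent)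
      (by simpa [Polynomial.map_eq_zero_iff hinj] using hf)
      (by simpa [Polynomial.map_eq_zero_iff hinj] using hg) hFG
    obtain ⟨n, r, hr⟩ := ρ.exists_T_pow
    refine ⟨r, ?_, fun i => ?_⟩
    · intro h0
      apply hρ
      have : ρ * T (n : ℤ) = 0 := by rw [← hr, h0, map_zero]
      have hTu : IsUnit (T (n : ℤ) : R[T;T⁻¹]) := isUnit_T _
      exact (hTu.mul_left_eq_zero).mp this
    · apply central_of_toLaurent_central
      have : toLaurent (f.coeff i * r) =
          ((f.map toLaurent).coeff i * ρ) * T (n : ℤ) := by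
        rw [map_mul, hr, Polynomial.coeff_map, mul_assoc]
      rw [this]
      exact Set.mul_mem_center (hcen i) (T_mem_center _)
  · -- Polynomial McCoy → Laurent McCoy
    intro h F G hF hG hFG
    obtain ⟨n, hn⟩ := exists_uniform_T_pow F
    obtain ⟨m, hm⟩ := exists_uniform_T_pow G
    -- F' := F * C (T n), G' := G * C (T m)
    set F' : Polynomial R[T;T⁻¹] := F * Polynomial.C (T (n : ℤ)) with hF'
    set G' : Polynomial R[T;T⁻¹] := G * Polynomial.C (T (m : ℤ)) with hG'
    have hCunit : ∀ k : ℕ, IsUnit (Polynomial.C (T (k : ℤ) : R[T;T⁻¹])) := fun k =>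
      (isUnit_T (k : ℤ)).map Polynomial.C
    have hF'0 : F' ≠ 0 := fun h0 => hF ((hCunit n).mul_left_eq_zero.mp h0)
    have hG'0 : G' ≠ 0 := fun h0 => hG ((hCunit m).mul_left_eq_zero.mp h0)
    have hF'G' : F' * G' = 0 := by
      rw [hF', hG', mul_assoc, ← mul_C_central_comm (G * Polynomial.C (T (m:ℤ)))
        (T_mem_center _)]
      simp only [← mul_assoc]
      rw [hFG, zero_mul, zero_mul]
    -- lift to polynomials over R[X]
    have hFl : F' ∈ Polynomial.lifts (toLaurent : R[X] →+* R[T;T⁻¹]) := by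
      rw [Polynomial.lifts_iff_coeff_lifts]
      intro i
      rw [hF', Polynomial.coeff_mul_C]
      exact hn i
    have hGl : G' ∈ Polynomial.lifts (toLaurent : R[X] →+* R[T;T⁻¹]) := by
      rw [Polynomial.lifts_iff_coeff_lifts]
      intro i
      rw [hG', Polynomial.coeff_mul_C]
      exact hm i
    obtain ⟨f, hfm⟩ := (Polynomial.mem_lifts _).mp hFl
    obtain ⟨g, hgm⟩ := (Polynomial.mem_lifts _).mp hGl
    have hinj : Function.Injective (toLaurent : R[X] →+* R[T;T⁻¹]) :=
      Polynomial.toLaurent_injective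
    have hf0 : f ≠ 0 := fun h0 => hF'0 (by rw [← hfm, h0, Polynomial.map_zero])
    have hg0 : g ≠ 0 := fun h0 => hG'0 (by rw [← hgm, h0, Polynomial.map_zero])
    have hfg : f * g = 0 := by
      apply Polynomial.map_injective _ hinj
      rw [Polynomial.map_mul, hfm, hgm, hF'G', Polynomial.map_zero]
    obtain ⟨r, hr0, hrc⟩ := h f g hf0 hg0 hfg
    refine ⟨toLaurent r, by simpa using hr0, fun i => ?_⟩
    have hcoeff : toLaurent (f.coeff i) = F.coeff i * T (n : ℤ) := by
      have := congrArg (fun p => Polynomial.coeff p i) hfm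
      simpa [Polynomial.coeff_map, Polynomial.coeff_mul_C, hF'] using this
    have hcent : toLaurent (f.coeff i * r) ∈ Set.center R[T;T⁻¹] :=
      toLaurent_central_of_central (hrc i)
    have key : F.coeff i * toLaurent r =
        T (-(n : ℤ)) * (toLaurent (f.coeff i * r)) := by
      have h1 : T (-(n : ℤ)) * (F.coeff i * T (n : ℤ)) = F.coeff i := by
        rw [← mul_assoc, (commute_T (-(n : ℤ)) (F.coeff i)).eq, mul_assoc, ← T_add]
        simp
      rw [map_mul, hcoeff, ← mul_assoc, h1]
    rw [key]
    exact Set.mul_mem_center (T_mem_center _) hcent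
end

section
/- For a ring R and any set {x_α} of commuting indeterminates, the polynomial ring R[{x_α}] is right Central McCoy if and only if R is right Central McCoy. -/
namespace AddMonoidAlgebra

variable {R M : Type*} [Ring R]

lemma coeff_mem_center [AddMonoid M] {z : AddMonoidAlgebra R M}
    (hz : z ∈ Set.center (AddMonoidAlgebra R M)) (m : M) : z.coeff m ∈ Set.center R := by
  refine Semigroup.mem_center_iff.mpr fun s => ?_
  simpa only [coeff_single_zero_mul, coeff_mul_single_zero] using
    congr_arg (coeff · m) (Semigroup.mem_center_iff.mp hz (single 0 s))

lemma mem_center_of_coeff_mem_center [AddCommMonoid M] {z : AddMonoidAlgebra R M}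
    (hz : ∀ m, z.coeff m ∈ Set.center R) : z ∈ Set.center (AddMonoidAlgebra R M) := by
  refine Semigroup.mem_center_iff.mpr fun g => ?_
  rw [← z.sum_coeff_single]
  refine (Commute.sum_right _ _ _ fun m _ => ?_).eq
  exact (single_commute (fun m' => AddCommute.all m m')
    (fun r => (Semigroup.mem_center_iff.mp (hz m) r).symm) g).symm

end AddMonoidAlgebra

def HasKroneckerMaps (M : Type*) [AddMonoid M] : Prop :=
  ∀ D : Finset M, ∃ φ : M →+ ℕ, Set.InjOn φ D

section Kronecker

variable {M : Type*} [AddMonoid M]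

def kroneckerHom (B : ℕ) : List (M →+ ℕ) → M →+ ℕ
  | [] => 0
  | c :: L => c + B • kroneckerHom B L

lemma kroneckerHom_apply (B : ℕ) (L : List (M →+ ℕ)) (m : M) :
    kroneckerHom B L m = Nat.ofDigits B (L.map (· m)) := by
  induction L with
  | nil => rfl
  | cons c L ih => simp [kroneckerHom, Nat.ofDigits_cons, ih]

lemma exists_addMonoidHom_injOn_of_injOn_map (D : Finset M) (L : List (M →+ ℕ))
    (hL : Set.InjOn (fun m => L.map (· m)) D) : ∃ φ : M →+ ℕ, Set.InjOn φ D := by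
  set B := ∑ m ∈ D, (L.map (· m)).sum + 2
  have hdigit : ∀ m ∈ D, ∀ k ∈ L.map (· m), k < B := fun m hm k hk =>
    calc k ≤ (L.map (· m)).sum := List.le_sum_of_mem hk
      _ ≤ ∑ m ∈ D, (L.map (· m)).sum := Finset.single_le_sum (f := fun m => (L.map (· m)).sum)
        (fun _ _ => Nat.zero_le _) hm
      _ < B := by omega
  refine ⟨kroneckerHom B L, fun m hm m' hm' h => hL hm hm' ?_⟩
  simp only [kroneckerHom_apply] at h
  exact Nat.ofDigits_inj_of_len_eq (by omega) (by simp) (hdigit m hm) (hdigit m' hm') h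

lemma hasKroneckerMaps_nat : HasKroneckerMaps ℕ :=
  fun _ => ⟨AddMonoidHom.id ℕ, Set.injOn_id _⟩

lemma HasKroneckerMaps.prod {N : Type*} [AddMonoid N] (hM : HasKroneckerMaps M)
    (hN : HasKroneckerMaps N) : HasKroneckerMaps (M × N) := by
  classical
  intro D
  obtain ⟨φ, hφ⟩ := hM (D.image Prod.fst)
  obtain ⟨ψ, hψ⟩ := hN (D.image Prod.snd)
  refine exists_addMonoidHom_injOn_of_injOn_map D [φ.comp (AddMonoidHom.fst M N),
    ψ.comp (AddMonoidHom.snd M N)] fun p hp p' hp' h => ?_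
  simp only [List.map_cons, List.map_nil, List.cons.injEq, AddMonoidHom.comp_apply,
    AddMonoidHom.coe_fst, AddMonoidHom.coe_snd, and_true] at h
  exact Prod.ext
    (hφ (Finset.mem_image_of_mem _ hp) (Finset.mem_image_of_mem _ hp') h.1)
    (hψ (Finset.mem_image_of_mem _ hp) (Finset.mem_image_of_mem _ hp') h.2)

lemma Finsupp.hasKroneckerMaps (ι : Type*) : HasKroneckerMaps (ι →₀ ℕ) := by
  classical
  intro D
  set V := D.biUnion Finsupp.support
  refine exists_addMonoidHom_injOn_of_injOn_map D (V.toList.map Finsupp.applyAddHom)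
    fun d hd d' hd' h => ?_
  simp only [List.map_map, List.map_inj_left, Function.comp_apply,
    Finsupp.applyAddHom_apply, Finset.mem_toList] at h
  ext s
  by_cases hs : s ∈ V
  · exact h s hs
  · have hsupp {e} (he : e ∈ (D : Set (ι →₀ ℕ))) : e s = 0 :=
      Finsupp.notMem_support_iff.mp fun h' => hs (Finset.mem_biUnion.mpr ⟨e, he, h'⟩)
    rw [hsupp hd, hsupp hd']

end Kronecker

namespace IsRightCentralMcCoy

variable {R M : Type*} [Ring R]

lemma of_addMonoidAlgebra [AddMonoid M] (h : IsRightCentralMcCoy (AddMonoidAlgebra R M)) :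
    IsRightCentralMcCoy R := by
  intro f g hf hg hfg
  let C : R →+* AddMonoidAlgebra R M := AddMonoidAlgebra.singleZeroRingHom
  have hC : Function.Injective C := AddMonoidAlgebra.single_right_injective
  obtain ⟨c, hc, hcenter⟩ := h (f.map C) (g.map C) ((Polynomial.map_ne_zero_iff hC).mpr hf)
    ((Polynomial.map_ne_zero_iff hC).mpr hg)
    (by rw [← Polynomial.map_mul, hfg, Polynomial.map_zero])
  obtain ⟨m, hm⟩ : ∃ m, c.coeff m ≠ 0 := by
    by_contra! h
    exact hc (AddMonoidAlgebra.ext (Finsupp.ext h))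
  refine ⟨c.coeff m, hm, fun i => ?_⟩
  simpa [C, AddMonoidAlgebra.coeff_single_zero_mul] using
    AddMonoidAlgebra.coeff_mem_center (hcenter i) m

lemma exists_forall_coeff_mul_mem_center [AddMonoid M] (hR : IsRightCentralMcCoy R)
    (hM : HasKroneckerMaps M) {F G : AddMonoidAlgebra R M} (hF : F ≠ 0) (hG : G ≠ 0)
    (hFG : F * G = 0) : ∃ r : R, r ≠ 0 ∧ ∀ m, F.coeff m * r ∈ Set.center R := by
  classical
  set D := F.coeff.support ∪ G.coeff.support
  obtain ⟨φ, hφ⟩ := hM D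
  let Ψ : AddMonoidAlgebra R M →+* Polynomial R :=
    (Polynomial.toFinsuppIso R).symm.toRingHom.comp (AddMonoidAlgebra.mapDomainRingHom R φ)
  have hΨ {P : AddMonoidAlgebra R M} (hP : P.coeff.support ⊆ D) {m : M}
      (hm : m ∈ P.coeff.support) : (Ψ P).coeff (φ m) = P.coeff m :=
    Finsupp.mapDomain_apply' _ _ (Finset.coe_subset.mpr hP) hφ (hP hm)
  have hΨ_ne_zero {P : AddMonoidAlgebra R M} (hP : P.coeff.support ⊆ D) (hP0 : P ≠ 0) :
      Ψ P ≠ 0 := by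
    obtain ⟨m, hm⟩ := Finsupp.support_nonempty_iff.mpr (AddMonoidAlgebra.coeff_eq_zero.not.mpr hP0)
    refine fun h => Finsupp.mem_support_iff.mp hm ?_
    rw [← hΨ hP hm, h, Polynomial.coeff_zero]
  obtain ⟨r, hr, hcenter⟩ := hR (Ψ F) (Ψ G) (hΨ_ne_zero Finset.subset_union_left hF)
    (hΨ_ne_zero Finset.subset_union_right hG) (by rw [← map_mul, hFG, map_zero])
  refine ⟨r, hr, fun m => ?_⟩
  by_cases hm : m ∈ F.coeff.support
  · rw [← hΨ Finset.subset_union_left hm]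
    exact hcenter _
  · rw [Finsupp.notMem_support_iff.mp hm, zero_mul]
    exact Set.zero_mem_center

lemma addMonoidAlgebra [AddCommMonoid M] (hR : IsRightCentralMcCoy R)
    (hM : HasKroneckerMaps M) : IsRightCentralMcCoy (AddMonoidAlgebra R M) := by
  intro f g hf hg hfg
  let E : Polynomial (AddMonoidAlgebra R M) ≃+* AddMonoidAlgebra R (ℕ × M) :=
    (Polynomial.toFinsuppIso _).trans AddMonoidAlgebra.curryRingEquiv.symm
  have hE (p : Polynomial (AddMonoidAlgebra R M)) (i : ℕ) (m : M) :
      (E p).coeff (i, m) = (p.coeff i).coeff m := rfl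
  obtain ⟨r, hr, hcenter⟩ := hR.exists_forall_coeff_mul_mem_center
    (hasKroneckerMaps_nat.prod hM) (E.map_ne_zero_iff.mpr hf) (E.map_ne_zero_iff.mpr hg)
    (by rw [← map_mul, hfg, map_zero])
  refine ⟨AddMonoidAlgebra.single 0 r, by simpa using hr, fun i =>
    AddMonoidAlgebra.mem_center_of_coeff_mem_center fun m => ?_⟩
  rw [AddMonoidAlgebra.coeff_mul_single_zero, ← hE]
  exact hcenter (i, m)

end IsRightCentralMcCoy

/-- For any set `σ` of commuting indeterminates, the polynomial ring
`R[{x_α}]` (realized as the monoid algebra of `σ →₀ ℕ` over `R`) is right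
Central McCoy iff `R` is. -/
theorem mvPolynomial_isRightCentralMcCoy_iff (R : Type*) [Ring R] (σ : Type*) :
    IsRightCentralMcCoy (AddMonoidAlgebra R (σ →₀ ℕ)) ↔
      IsRightCentralMcCoy R :=
  ⟨IsRightCentralMcCoy.of_addMonoidAlgebra,
    fun h => h.addMonoidAlgebra (Finsupp.hasKroneckerMaps σ)⟩
end

section
/- Let K be a field and S the K-algebra generated by elements x, y, z subject to the relations x² = yx = x, y² = xy = y, z² = 0, zx = xz = yz = zy = z. Then S is right Central McCoy but not right McCoy; in particular (x + yt)((1−x) + (1−y)t) = 0 in S[t] with both factors nonzero, yet no nonzero r ∈ S satisfies xr = yr = 0. -/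
def IsRightMcCoy (R : Type*) [Ring R] : Prop :=
  ∀ f g : Polynomial R, f ≠ 0 → g ≠ 0 → f * g = 0 →
    ∃ r : R, r ≠ 0 ∧ ∀ i : ℕ, f.coeff i * r = 0

namespace Stmt17

variable (K : Type*) [Field K]

/-- The defining relations `x² = yx = x`, `y² = xy = y`, `z² = 0`,
`zx = xz = yz = zy = z` on the free algebra `K⟨x, y, z⟩`. -/
inductive Rel : FreeAlgebra K (Fin 3) → FreeAlgebra K (Fin 3) → Prop
  | xx : Rel (FreeAlgebra.ι K 0 * FreeAlgebra.ι K 0) (FreeAlgebra.ι K 0)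
  | yx : Rel (FreeAlgebra.ι K 1 * FreeAlgebra.ι K 0) (FreeAlgebra.ι K 0)
  | zz : Rel (FreeAlgebra.ι K 2 * FreeAlgebra.ι K 2) 0
  | yy : Rel (FreeAlgebra.ι K 1 * FreeAlgebra.ι K 1) (FreeAlgebra.ι K 1)
  | xy : Rel (FreeAlgebra.ι K 0 * FreeAlgebra.ι K 1) (FreeAlgebra.ι K 1)
  | zx : Rel (FreeAlgebra.ι K 2 * FreeAlgebra.ι K 0) (FreeAlgebra.ι K 2)
  | xz : Rel (FreeAlgebra.ι K 0 * FreeAlgebra.ι K 2) (FreeAlgebra.ι K 2)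
  | yz : Rel (FreeAlgebra.ι K 1 * FreeAlgebra.ι K 2) (FreeAlgebra.ι K 2)
  | zy : Rel (FreeAlgebra.ι K 2 * FreeAlgebra.ι K 1) (FreeAlgebra.ι K 2)

/-- The algebra `S = K⟨x, y, z⟩ / (relations)`. -/
abbrev S := RingQuot (Rel K)

noncomputable def x : S K := RingQuot.mkRingHom (Rel K) (FreeAlgebra.ι K 0)
noncomputable def y : S K := RingQuot.mkRingHom (Rel K) (FreeAlgebra.ι K 1)

/-! ### Auxiliary material -/

noncomputable def z : S K := RingQuot.mkRingHom (Rel K) (FreeAlgebra.ι K 2)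

section Model

/-- Concrete model of `S`: elements `a + b x + c y + d z`. -/
@[ext] structure M (K : Type*) where
  a : K
  b : K
  c : K
  d : K

variable {K}

instance : Add (M K) := ⟨fun m n => ⟨m.a + n.a, m.b + n.b, m.c + n.c, m.d + n.d⟩⟩
instance : Neg (M K) := ⟨fun m => ⟨-m.a, -m.b, -m.c, -m.d⟩⟩
instance : Zero (M K) := ⟨⟨0, 0, 0, 0⟩⟩
instance : One (M K) := ⟨⟨1, 0, 0, 0⟩⟩
instance : Mul (M K) := ⟨fun m n =>
  ⟨m.a * n.a,
   m.a * n.b + m.b * n.a + m.b * n.b + m.c * n.b,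
   m.a * n.c + m.c * n.a + m.b * n.c + m.c * n.c,
   m.a * n.d + m.d * n.a + m.b * n.d + m.c * n.d + m.d * n.b + m.d * n.c⟩⟩

@[simp] lemma add_a (m n : M K) : (m + n).a = m.a + n.a := rfl
@[simp] lemma add_b (m n : M K) : (m + n).b = m.b + n.b := rfl
@[simp] lemma add_c (m n : M K) : (m + n).c = m.c + n.c := rfl
@[simp] lemma add_d (m n : M K) : (m + n).d = m.d + n.d := rfl
@[simp] lemma neg_a (m : M K) : (-m).a = -m.a := rfl
@[simp] lemma neg_b (m : M K) : (-m).b = -m.b := rfl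
@[simp] lemma neg_c (m : M K) : (-m).c = -m.c := rfl
@[simp] lemma neg_d (m : M K) : (-m).d = -m.d := rfl
@[simp] lemma zero_a : (0 : M K).a = 0 := rfl
@[simp] lemma zero_b : (0 : M K).b = 0 := rfl
@[simp] lemma zero_c : (0 : M K).c = 0 := rfl
@[simp] lemma zero_d : (0 : M K).d = 0 := rfl
@[simp] lemma one_a : (1 : M K).a = 1 := rfl
@[simp] lemma one_b : (1 : M K).b = 0 := rfl
@[simp] lemma one_c : (1 : M K).c = 0 := rfl
@[simp] lemma one_d : (1 : M K).d = 0 := rfl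
@[simp] lemma mul_a (m n : M K) : (m * n).a = m.a * n.a := rfl
@[simp] lemma mul_b (m n : M K) :
    (m * n).b = m.a * n.b + m.b * n.a + m.b * n.b + m.c * n.b := rfl
@[simp] lemma mul_c (m n : M K) :
    (m * n).c = m.a * n.c + m.c * n.a + m.b * n.c + m.c * n.c := rfl
@[simp] lemma mul_d (m n : M K) :
    (m * n).d = m.a * n.d + m.d * n.a + m.b * n.d + m.c * n.d + m.d * n.b + m.d * n.c := rfl

instance : Ring (M K) where
  add_assoc a b c := by ext <;> simp <;> ring
  zero_add a := by ext <;> simp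
  add_zero a := by ext <;> simp
  add_comm a b := by ext <;> simp <;> ring
  neg_add_cancel a := by ext <;> simp
  mul_assoc a b c := by ext <;> simp <;> ring
  one_mul a := by ext <;> simp
  mul_one a := by ext <;> simp
  left_distrib a b c := by ext <;> simp <;> ring
  right_distrib a b c := by ext <;> simp <;> ring
  zero_mul a := by ext <;> simp
  mul_zero a := by ext <;> simp
  nsmul := nsmulRec
  zsmul := zsmulRec

variable (K) in
def toM : K →+* M K where
  toFun a := ⟨a, 0, 0, 0⟩
  map_one' := rfl
  map_mul' a b := by ext <;> simp
  map_zero' := rfl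
  map_add' a b := by ext <;> simp

noncomputable instance : Algebra K (M K) :=
  (toM K).toAlgebra' (fun c m => by ext <;> simp [toM] <;> ring)

@[simp] lemma algebraMap_a (r : K) : (algebraMap K (M K) r).a = r := rfl
@[simp] lemma algebraMap_b (r : K) : (algebraMap K (M K) r).b = 0 := rfl
@[simp] lemma algebraMap_c (r : K) : (algebraMap K (M K) r).c = 0 := rfl
@[simp] lemma algebraMap_d (r : K) : (algebraMap K (M K) r).d = 0 := rfl

@[simp] lemma smul_a (r : K) (m : M K) : (r • m).a = r * m.a := rfl
@[simp] lemma smul_b (r : K) (m : M K) : (r • m).b = r * m.b := by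
  change (toM K r * m).b = _; simp [toM]
@[simp] lemma smul_c (r : K) (m : M K) : (r • m).c = r * m.c := by
  change (toM K r * m).c = _; simp [toM]
@[simp] lemma smul_d (r : K) (m : M K) : (r • m).d = r * m.d := by
  change (toM K r * m).d = _; simp [toM]

def mX : M K := ⟨0, 1, 0, 0⟩
def mY : M K := ⟨0, 0, 1, 0⟩
def mZ : M K := ⟨0, 0, 0, 1⟩

end Model

variable {K}

/-- The representation `φ : S → M`. -/
noncomputable def φ₀ : FreeAlgebra K (Fin 3) →ₐ[K] M K :=
  FreeAlgebra.lift K ![mX, mY, mZ]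

lemma φ₀_rel : ∀ ⦃u v : FreeAlgebra K (Fin 3)⦄, Rel K u v → φ₀ u = φ₀ v := by
  intro u v h
  induction h <;>
    simp [φ₀, FreeAlgebra.lift_ι_apply, mX, mY, mZ] <;>
    ext <;> simp

noncomputable def φ : S K →ₐ[K] M K :=
  RingQuot.liftAlgHom K ⟨φ₀, φ₀_rel⟩

lemma mk_eq (w : FreeAlgebra K (Fin 3)) :
    RingQuot.mkRingHom (Rel K) w = RingQuot.mkAlgHom K (Rel K) w := by
  rw [← RingQuot.mkAlgHom_coe K]; rfl

@[simp] lemma φ_x : φ (x K) = mX := by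
  rw [x, mk_eq, φ, RingQuot.liftAlgHom_mkAlgHom_apply]
  simp [φ₀, FreeAlgebra.lift_ι_apply]

@[simp] lemma φ_y : φ (y K) = mY := by
  rw [y, mk_eq, φ, RingQuot.liftAlgHom_mkAlgHom_apply]
  simp [φ₀, FreeAlgebra.lift_ι_apply]

@[simp] lemma φ_z : φ (z K) = mZ := by
  rw [z, mk_eq, φ, RingQuot.liftAlgHom_mkAlgHom_apply]
  simp [φ₀, FreeAlgebra.lift_ι_apply]

/-- Relations in `S`. -/
lemma rel_eq {u v : FreeAlgebra K (Fin 3)} (h : Rel K u v) :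
    RingQuot.mkRingHom (Rel K) u = RingQuot.mkRingHom (Rel K) v :=
  RingQuot.mkRingHom_rel h

lemma sxx : x K * x K = x K := by
  rw [x, ← map_mul]; exact rel_eq Rel.xx
lemma syx : y K * x K = x K := by
  rw [x, y, ← map_mul]; exact rel_eq Rel.yx
lemma szz : z K * z K = 0 := by
  rw [z, ← map_mul]; exact (rel_eq Rel.zz).trans (map_zero _)
lemma syy : y K * y K = y K := by
  rw [y, ← map_mul]; exact rel_eq Rel.yy
lemma sxy : x K * y K = y K := by
  rw [x, y, ← map_mul]; exact rel_eq Rel.xy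
lemma szx : z K * x K = z K := by
  rw [x, z, ← map_mul]; exact rel_eq Rel.zx
lemma sxz : x K * z K = z K := by
  rw [x, z, ← map_mul]; exact rel_eq Rel.xz
lemma syz : y K * z K = z K := by
  rw [y, z, ← map_mul]; exact rel_eq Rel.yz
lemma szy : z K * y K = z K := by
  rw [y, z, ← map_mul]; exact rel_eq Rel.zy

/-- The section `ψ : M → S` (K-linear, not multiplicative a priori). -/
noncomputable def ψ (m : M K) : S K :=
  m.a • (1 : S K) + m.b • x K + m.c • y K + m.d • z K

lemma ψ_add (m n : M K) : ψ (m + n) = ψ m + ψ n := by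
  simp only [ψ, add_a, add_b, add_c, add_d, add_smul]
  abel

lemma ψ_mul (m n : M K) : ψ m * ψ n = ψ (m * n) := by
  simp only [ψ, add_mul, mul_add, smul_mul_smul_comm, one_mul, mul_one,
    sxx, syx, szz, syy, sxy, szx, sxz, syz, szy, smul_zero,
    mul_a, mul_b, mul_c, mul_d, add_smul]
  module

lemma ψ_φ (s : S K) : ψ (φ s) = s := by
  obtain ⟨w, rfl⟩ := RingQuot.mkAlgHom_surjective K (Rel K) s
  induction w using FreeAlgebra.induction with
  | grade0 r =>
      rw [AlgHom.commutes, AlgHom.commutes]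
      simp [ψ, Algebra.algebraMap_eq_smul_one]
  | grade1 i =>
      have g0 : ψ (φ ((RingQuot.mkAlgHom K (Rel K)) (FreeAlgebra.ι K 0)))
          = (RingQuot.mkAlgHom K (Rel K)) (FreeAlgebra.ι K 0) := by
        rw [show (RingQuot.mkAlgHom K (Rel K)) (FreeAlgebra.ι K 0) = x K from (mk_eq _).symm]
        simp [ψ, φ_x, mX]
      have g1 : ψ (φ ((RingQuot.mkAlgHom K (Rel K)) (FreeAlgebra.ι K 1)))
          = (RingQuot.mkAlgHom K (Rel K)) (FreeAlgebra.ι K 1) := by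
        rw [show (RingQuot.mkAlgHom K (Rel K)) (FreeAlgebra.ι K 1) = y K from (mk_eq _).symm]
        simp [ψ, φ_y, mY]
      have g2 : ψ (φ ((RingQuot.mkAlgHom K (Rel K)) (FreeAlgebra.ι K 2)))
          = (RingQuot.mkAlgHom K (Rel K)) (FreeAlgebra.ι K 2) := by
        rw [show (RingQuot.mkAlgHom K (Rel K)) (FreeAlgebra.ι K 2) = z K from (mk_eq _).symm]
        simp [ψ, φ_z, mZ]
      fin_cases i
      · exact g0
      · exact g1
      · exact g2
  | mul a b ha hb =>
      rw [map_mul, map_mul, ← ψ_mul, ha, hb]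
  | add a b ha hb =>
      rw [map_add, map_add, ψ_add, ha, hb]

lemma φ_inj : Function.Injective (φ : S K → M K) := by
  intro s t h
  rw [← ψ_φ s, ← ψ_φ t, h]

lemma z_ne_zero : z K ≠ 0 := by
  intro h
  have := congrArg φ h
  rw [φ_z, map_zero] at this
  have := congrArg M.d this
  simpa [mZ] using this

lemma x_ne_zero : x K ≠ 0 := by
  intro h
  have := congrArg φ h
  rw [φ_x, map_zero] at this
  have := congrArg M.b this
  simpa [mX] using this

lemma one_sub_x_ne_zero : (1 : S K) - x K ≠ 0 := by
  intro h
  have := congrArg φ h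
  rw [map_sub, φ_x, map_one, map_zero] at this
  have h2 := congrArg M.a this
  rw [sub_eq_add_neg] at h2
  simpa [mX] using h2

lemma killer : ∀ r : S K, x K * r = 0 → y K * r = 0 → r = 0 := by
  intro r hx hy
  apply φ_inj
  rw [map_zero]
  have hx' := congrArg φ hx
  have hy' := congrArg φ hy
  rw [map_mul, φ_x, map_zero] at hx'
  rw [map_mul, φ_y, map_zero] at hy'
  set m := φ r with hm
  have hb : (mX * m).b = 0 := by rw [hx']; simp
  have hc : (mX * m).c = 0 := by rw [hx']; simp
  have hd : (mX * m).d = 0 := by rw [hx']; simp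
  have hb' : (mY * m).b = 0 := by rw [hy']; simp
  have hc' : (mY * m).c = 0 := by rw [hy']; simp
  simp only [mul_b, mul_c, mul_d, mX, mY] at hb hc hd hb' hc'
  ext
  · -- a
    have h1 : m.a + m.b = 0 := by linear_combination hb
    have h2 : m.b = 0 := by linear_combination hb'
    simpa [h2] using h1
  · simpa using (by linear_combination hb' : m.b = 0)
  · simpa using (by linear_combination hc : m.c = 0)
  · simpa using (by linear_combination hd : m.d = 0)

lemma smul_z_central (s : S K) : s * z K ∈ Set.center (S K) := by
  rw [Semigroup.mem_center_iff]
  intro t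
  apply φ_inj
  rw [map_mul, map_mul, map_mul, map_mul, φ_z]
  ext <;> simp [mZ] <;> ring

open Polynomial in
theorem main :
    IsRightCentralMcCoy (S K) ∧ ¬ IsRightMcCoy (S K) ∧
    (C (x K) + C (y K) * X) * (C (1 - x K) + C (1 - y K) * X) = 0 ∧
    (C (x K) + C (y K) * X) ≠ 0 ∧
    (C (1 - x K) + C (1 - y K) * X) ≠ 0 ∧
    ∀ r : S K, x K * r = 0 → y K * r = 0 → r = 0 := by
  have hxg : x K * (1 - x K) = 0 := by rw [mul_sub, mul_one, sxx, sub_self]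
  have hyg : y K * (1 - y K) = 0 := by rw [mul_sub, mul_one, syy, sub_self]
  have hcross : x K * (1 - y K) + y K * (1 - x K) = 0 := by
    rw [mul_sub, mul_sub, mul_one, mul_one, sxy, syx]; abel
  have hfg : (C (x K) + C (y K) * X) * (C (1 - x K) + C (1 - y K) * X) = 0 := by
    rw [add_mul, mul_add, mul_add]
    rw [← C_mul, hxg, map_zero]
    rw [← mul_assoc (C (x K)), ← C_mul]
    rw [mul_assoc (C (y K)) X (C (1 - x K)), Polynomial.X_mul, ← mul_assoc, ← C_mul]
    rw [mul_assoc (C (y K)) X (C (1 - y K) * X), ← mul_assoc X, Polynomial.X_mul,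
      mul_assoc (C (1 - y K)) X X, ← mul_assoc, ← C_mul, hyg, map_zero, zero_mul]
    rw [zero_add, add_zero, ← add_mul, ← C_add, hcross, map_zero, zero_mul]
  have hf : (C (x K) + C (y K) * X) ≠ 0 := by
    intro h
    have := congrArg (fun p => Polynomial.coeff p 0) h
    simp at this
    exact x_ne_zero this
  have hg : (C (1 - x K) + C (1 - y K) * X) ≠ 0 := by
    intro h
    have := congrArg (fun p => Polynomial.coeff p 0) h
    simp at this
    exact one_sub_x_ne_zero this
  refine ⟨?_, ?_, hfg, hf, hg, killer⟩
  · intro f g hf0 hg0 hfg0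
    exact ⟨z K, z_ne_zero, fun i => smul_z_central _⟩
  · intro H
    obtain ⟨r, hr0, hr⟩ := H _ _ hf hg hfg
    have h0 := hr 0
    have h1 := hr 1
    simp [Polynomial.coeff_add, Polynomial.coeff_C] at h0 h1
    exact hr0 (killer r h0 h1)

end Stmt17
end
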